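/- arXiv:1907.07630 — 7 statements merged into one kernel-verified Lean document; each statement's English description precedes it below -/
import Mathlib

section
/- Let φ, ψ : [0,1] → [0,1] be twice continuously differentiable functions with Dφ(x) > 0 and Dψ(x) > 0 for all x ∈ [0,1], and with φ(0) = ψ(0) = 0 and φ(1) = ψ(1) = 1. If Nφ(x) = Nψ(x) for all x ∈ [0,1], then φ = ψ. In particular the nonlinearity operator N is injective on orientation-preserving C² diffeomorphisms of [0,1] fixing the endpoints. -/
/-!
Equal nonlinearity means `Dφ / Dψ` has zero derivative, so `Dφ = c * Dψ`. Then `φ - c * ψ` is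
constant, and the boundary values force the constant to be `0` and `c = 1`.
-/

open Set

theorem Convex.eq_of_hasDerivWithinAt_zero {E : Type*} [NormedAddCommGroup E] [NormedSpace ℝ E]
    {s : Set ℝ} (hs : Convex ℝ s) {f : ℝ → E} (hf : ∀ x ∈ s, HasDerivWithinAt f 0 s x)
    {a x : ℝ} (ha : a ∈ s) (hx : x ∈ s) : f x = f a := by
  have h := hs.norm_image_sub_le_of_norm_hasDerivWithin_le hf (fun _ _ => norm_zero.le) ha hx
  rwa [zero_mul, norm_le_zero_iff, sub_eq_zero] at h

theorem hasDerivWithinAt_div_zero_of_div_eq {𝕜 : Type*} [NontriviallyNormedField 𝕜]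
    {f g : 𝕜 → 𝕜} {f' g' x : 𝕜} {s : Set 𝕜} (hf : HasDerivWithinAt f f' s x)
    (hg : HasDerivWithinAt g g' s x) (hfx : f x ≠ 0) (hgx : g x ≠ 0)
    (h : f' / f x = g' / g x) : HasDerivWithinAt (fun y => f y / g y) 0 s x := by
  have hcross : f' * g x = g' * f x := by
    field_simp at h
    linear_combination h
  exact (hf.div hg hgx).congr_deriv (by rw [hcross, mul_comm, sub_self, zero_div])

section

variable {s : Set ℝ} {f g f' g' : ℝ → ℝ}

theorem Convex.eq_div_mul_of_div_deriv_eq (hs : Convex ℝ s)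
    (hf : ∀ x ∈ s, HasDerivWithinAt f (f' x) s x) (hg : ∀ x ∈ s, HasDerivWithinAt g (g' x) s x)
    (hf0 : ∀ x ∈ s, f x ≠ 0) (hg0 : ∀ x ∈ s, g x ≠ 0) (h : ∀ x ∈ s, f' x / f x = g' x / g x)
    {a : ℝ} (ha : a ∈ s) : ∀ x ∈ s, f x = f a / g a * g x := by
  intro x hx
  have hquot := hs.eq_of_hasDerivWithinAt_zero
    (fun y hy => hasDerivWithinAt_div_zero_of_div_eq (hf y hy) (hg y hy) (hf0 y hy) (hg0 y hy)
      (h y hy)) ha hx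
  rw [← hquot, div_mul_cancel₀ _ (hg0 x hx)]

theorem Convex.sub_const_mul_eq_of_deriv_eq_const_mul (hs : Convex ℝ s) {c : ℝ}
    (hf : ∀ x ∈ s, HasDerivWithinAt f (f' x) s x) (hg : ∀ x ∈ s, HasDerivWithinAt g (g' x) s x)
    (h : ∀ x ∈ s, f' x = c * g' x) {a x : ℝ} (ha : a ∈ s) (hx : x ∈ s) :
    f x - c * g x = f a - c * g a :=
  hs.eq_of_hasDerivWithinAt_zero (f := fun y => f y - c * g y)
    (fun y hy => ((hf y hy).sub ((hg y hy).const_mul c)).congr_deriv (by rw [h y hy, sub_self]))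
    ha hx

end

theorem nonlinearity_operator_injective_general
    (φ ψ φ' φ'' ψ' ψ'' : ℝ → ℝ)
    (hφ1 : ∀ x ∈ Set.Icc (0:ℝ) 1, HasDerivWithinAt φ (φ' x) (Set.Icc 0 1) x)
    (hφ2 : ∀ x ∈ Set.Icc (0:ℝ) 1, HasDerivWithinAt φ' (φ'' x) (Set.Icc 0 1) x)
    (hφpos : ∀ x ∈ Set.Icc (0:ℝ) 1, 0 < φ' x)
    (hψ1 : ∀ x ∈ Set.Icc (0:ℝ) 1, HasDerivWithinAt ψ (ψ' x) (Set.Icc 0 1) x)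
    (hψ2 : ∀ x ∈ Set.Icc (0:ℝ) 1, HasDerivWithinAt ψ' (ψ'' x) (Set.Icc 0 1) x)
    (hψpos : ∀ x ∈ Set.Icc (0:ℝ) 1, 0 < ψ' x)
    (hφ0 : φ 0 = 0) (hφ1e : φ 1 = 1) (hψ0 : ψ 0 = 0) (hψ1e : ψ 1 = 1)
    (hN : ∀ x ∈ Set.Icc (0:ℝ) 1, φ'' x / φ' x = ψ'' x / ψ' x) :
    Set.EqOn φ ψ (Set.Icc 0 1) := by
  have h0 : (0:ℝ) ∈ Icc (0:ℝ) 1 := left_mem_Icc.2 zero_le_one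
  set c := φ' 0 / ψ' 0
  have hprop : ∀ x ∈ Icc (0:ℝ) 1, φ' x = c * ψ' x :=
    (convex_Icc 0 1).eq_div_mul_of_div_deriv_eq hφ2 hψ2 (fun x hx => (hφpos x hx).ne')
      (fun x hx => (hψpos x hx).ne') hN h0
  have hlin : ∀ x ∈ Icc (0:ℝ) 1, φ x - c * ψ x = 0 := fun x hx => by
    simpa [hφ0, hψ0] using
      (convex_Icc 0 1).sub_const_mul_eq_of_deriv_eq_const_mul hφ1 hψ1 hprop h0 hx
  have hc : c = 1 := by
    have h1 := hlin 1 (right_mem_Icc.2 zero_le_one)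
    rw [hφ1e, hψ1e] at h1
    linarith
  intro x hx
  have hx' := hlin x hx
  rw [hc, one_mul, sub_eq_zero] at hx'
  exact hx'

/-- The nonlinearity operator is injective: two orientation-preserving C² diffeomorphisms
of `[0,1]` fixing the endpoints with the same nonlinearity `D²φ/Dφ` coincide. -/
theorem nonlinearity_operator_injective
    (φ ψ φ' φ'' ψ' ψ'' : ℝ → ℝ)
    (hφmaps : Set.MapsTo φ (Set.Icc 0 1) (Set.Icc 0 1))
    (hψmaps : Set.MapsTo ψ (Set.Icc 0 1) (Set.Icc 0 1))
    (hφ1 : ∀ x ∈ Set.Icc (0:ℝ) 1, HasDerivWithinAt φ (φ' x) (Set.Icc 0 1) x)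
    (hφ2 : ∀ x ∈ Set.Icc (0:ℝ) 1, HasDerivWithinAt φ' (φ'' x) (Set.Icc 0 1) x)
    (hφ''c : ContinuousOn φ'' (Set.Icc 0 1))
    (hφpos : ∀ x ∈ Set.Icc (0:ℝ) 1, 0 < φ' x)
    (hψ1 : ∀ x ∈ Set.Icc (0:ℝ) 1, HasDerivWithinAt ψ (ψ' x) (Set.Icc 0 1) x)
    (hψ2 : ∀ x ∈ Set.Icc (0:ℝ) 1, HasDerivWithinAt ψ' (ψ'' x) (Set.Icc 0 1) x)
    (hψ''c : ContinuousOn ψ'' (Set.Icc 0 1))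
    (hψpos : ∀ x ∈ Set.Icc (0:ℝ) 1, 0 < ψ' x)
    (hφ0 : φ 0 = 0) (hφ1e : φ 1 = 1) (hψ0 : ψ 0 = 0) (hψ1e : ψ 1 = 1)
    (hN : ∀ x ∈ Set.Icc (0:ℝ) 1, φ'' x / φ' x = ψ'' x / ψ' x) :
    Set.EqOn φ ψ (Set.Icc 0 1) :=
  nonlinearity_operator_injective_general φ ψ φ' φ'' ψ' ψ'' hφ1 hφ2 hφpos hψ1 hψ2 hψpos hφ0 hφ1e hψ0
    hψ1e hN
end

section
/- Let J be a compact interval, ν ∈ (0,1), and let f : J → ℝ be a twice differentiable map with f(J) ⊆ J and 0 < Df(x) ≤ ν for all x ∈ J. If |Nf(x)| ≤ C₁ for all x ∈ J, then for every k ≥ 1 and every x ∈ J, |Nf^k(x)| ≤ C₁/(1 − ν). That is, the nonlinearities of all iterates of f are uniformly bounded in terms of the bound on Nf and ν. -/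
open Set Finset

/-!
Write `Df^k(x) = ∏_{j<k} Df(fʲ x)`. Differentiating this product gives the chain rule for
nonlinearities, `N(f^k)(x) = ∑_{j<k} Nf(fʲ x) · Df^j(x)`. Since `|Nf| ≤ C₁` and `Df^j ≤ νʲ`
along the orbit, the sum is dominated by the geometric series `C₁ ∑ νʲ ≤ C₁ / (1 - ν)`.
-/

section IterateDeriv

variable {𝕜 : Type*} [NontriviallyNormedField 𝕜]

/-- The derivative of `f^[k]` at `x` by the chain rule, given a derivative `f'` of `f`. -/
def iterateDeriv (f f' : 𝕜 → 𝕜) (k : ℕ) (x : 𝕜) : 𝕜 :=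
  ∏ j ∈ range k, f' (f^[j] x)

variable {f f' f'' : 𝕜 → 𝕜} {s : Set 𝕜}

theorem iterateDeriv_succ (k : ℕ) (x : 𝕜) :
    iterateDeriv f f' (k + 1) x = iterateDeriv f f' k x * f' (f^[k] x) :=
  prod_range_succ _ _

theorem hasDerivAt_iterate_of_mapsTo (hmaps : MapsTo f s s)
    (hf : ∀ x ∈ s, HasDerivAt f (f' x) x) (k : ℕ) {x : 𝕜} (hx : x ∈ s) :
    HasDerivAt f^[k] (iterateDeriv f f' k x) x := by
  induction k with
  | zero => simpa [iterateDeriv] using hasDerivAt_id x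
  | succ k ih =>
    rw [Function.iterate_succ', iterateDeriv_succ, mul_comm]
    exact (hf _ (hmaps.iterate k hx)).comp x ih

/-- Chain rule for the nonlinearity `D²g / Dg` of `g = f^[k]`. -/
theorem hasDerivAt_iterateDeriv (hmaps : MapsTo f s s)
    (hf : ∀ x ∈ s, HasDerivAt f (f' x) x) (hf' : ∀ x ∈ s, HasDerivAt f' (f'' x) x)
    (hf'_ne : ∀ x ∈ s, f' x ≠ 0) (k : ℕ) {x : 𝕜} (hx : x ∈ s) :
    HasDerivAt (iterateDeriv f f' k)
      (iterateDeriv f f' k x *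
        ∑ j ∈ range k, f'' (f^[j] x) / f' (f^[j] x) * iterateDeriv f f' j x) x := by
  induction k with
  | zero =>
    show HasDerivAt (fun y => ∏ j ∈ range 0, f' (f^[j] y)) _ x
    simpa using hasDerivAt_const x (1 : 𝕜)
  | succ k ih =>
    have hfactor : HasDerivAt (fun y => f' (f^[k] y))
        (f'' (f^[k] x) * iterateDeriv f f' k x) x :=
      (hf' _ (hmaps.iterate k hx)).comp x (hasDerivAt_iterate_of_mapsTo hmaps hf k hx)
    have hne := hf'_ne _ (hmaps.iterate k hx)
    rw [show iterateDeriv f f' (k + 1) = fun y => iterateDeriv f f' k y * f' (f^[k] y) from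
      funext (iterateDeriv_succ k)]
    refine (ih.mul hfactor).congr_deriv ?_
    rw [sum_range_succ]
    beta_reduce
    field_simp

end IterateDeriv

section Real

variable {f f' : ℝ → ℝ} {s : Set ℝ}

theorem iterateDeriv_pos (hmaps : MapsTo f s s) (hpos : ∀ x ∈ s, 0 < f' x) (k : ℕ) {x : ℝ}
    (hx : x ∈ s) : 0 < iterateDeriv f f' k x :=
  prod_pos fun j _ => hpos _ (hmaps.iterate j hx)

theorem iterateDeriv_le_pow {ν : ℝ} (hmaps : MapsTo f s s) (hpos : ∀ x ∈ s, 0 < f' x)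
    (hle : ∀ x ∈ s, f' x ≤ ν) (k : ℕ) {x : ℝ} (hx : x ∈ s) : iterateDeriv f f' k x ≤ ν ^ k :=
  calc iterateDeriv f f' k x ≤ ∏ _j ∈ range k, ν :=
        prod_le_prod (fun j _ => (hpos _ (hmaps.iterate j hx)).le)
          (fun j _ => hle _ (hmaps.iterate j hx))
    _ = ν ^ k := by rw [prod_const, card_range]

end Real

theorem abs_sum_mul_le_of_le_geom {ν C : ℝ} (hν₀ : 0 ≤ ν) (hν₁ : ν < 1) (hC : 0 ≤ C) {k : ℕ}
    {a b : ℕ → ℝ} (ha : ∀ j < k, |a j| ≤ C) (hb_nonneg : ∀ j < k, 0 ≤ b j)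
    (hb : ∀ j < k, b j ≤ ν ^ j) :
    |∑ j ∈ range k, a j * b j| ≤ C / (1 - ν) :=
  calc |∑ j ∈ range k, a j * b j| ≤ ∑ j ∈ range k, C * ν ^ j := by
        refine (abs_sum_le_sum_abs _ _).trans (sum_le_sum fun j hj => ?_)
        have hj := mem_range.mp hj
        rw [abs_mul, abs_of_nonneg (hb_nonneg j hj)]
        exact mul_le_mul (ha j hj) (hb j hj) (hb_nonneg j hj) hC
    _ = C * ∑ j ∈ range k, ν ^ j := (mul_sum _ _ _).symm
    _ ≤ C * (1 / (1 - ν)) := by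
        refine mul_le_mul_of_nonneg_left ?_ hC
        have := geom_sum_Ico_le_of_lt_one (m := 0) (n := k) hν₀ hν₁
        rwa [← range_eq_Ico, pow_zero] at this
    _ = C / (1 - ν) := mul_one_div _ _

theorem nonlinearity_of_iterates_uniformly_bounded_general
    (a b ν C₁ : ℝ) (hν : ν ∈ Set.Ioo (0:ℝ) 1)
    (f f' f'' : ℝ → ℝ)
    (hmaps : Set.MapsTo f (Set.Icc a b) (Set.Icc a b))
    (hd1 : ∀ x ∈ Set.Icc a b, HasDerivAt f (f' x) x)
    (hd2 : ∀ x ∈ Set.Icc a b, HasDerivAt f' (f'' x) x)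
    (hpos : ∀ x ∈ Set.Icc a b, 0 < f' x)
    (hle : ∀ x ∈ Set.Icc a b, f' x ≤ ν)
    (hN : ∀ x ∈ Set.Icc a b, |f'' x / f' x| ≤ C₁) :
    ∀ k : ℕ, 1 ≤ k → ∀ x ∈ Set.Icc a b,
      HasDerivAt (f^[k]) (∏ j ∈ Finset.range k, f' (f^[j] x)) x ∧
      ∃ d : ℝ,
        HasDerivAt (fun y => ∏ j ∈ Finset.range k, f' (f^[j] y)) d x ∧
        |d / (∏ j ∈ Finset.range k, f' (f^[j] x))| ≤ C₁ / (1 - ν) := by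
  intro k _ x hx
  refine ⟨hasDerivAt_iterate_of_mapsTo hmaps hd1 k hx, _,
    hasDerivAt_iterateDeriv hmaps hd1 hd2 (fun y hy => (hpos y hy).ne') k hx, ?_⟩
  change |(iterateDeriv f f' k x * _) / iterateDeriv f f' k x| ≤ _
  rw [mul_div_cancel_left₀ _ (iterateDeriv_pos hmaps hpos k hx).ne']
  exact abs_sum_mul_le_of_le_geom hν.1.le hν.2 ((abs_nonneg _).trans (hN x hx))
    (fun j _ => hN _ (hmaps.iterate j hx)) (fun j _ => (iterateDeriv_pos hmaps hpos j hx).le)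
    (fun j _ => iterateDeriv_le_pow hmaps hpos hle j hx)

/-- Uniform bound on the nonlinearities of iterates: if `0 < Df ≤ ν < 1` and `|Nf| ≤ C₁`
on the compact invariant interval `J = [a,b]`, then `|Nf^k| ≤ C₁/(1−ν)` for every `k ≥ 1`.
Here `Df^k(x) = ∏_{j<k} f'(fʲ(x))` and `d = D²f^k(x)`, so `d / Df^k(x) = Nf^k(x)`. -/
theorem nonlinearity_of_iterates_uniformly_bounded
    (a b ν C₁ : ℝ) (hab : a < b) (hν : ν ∈ Set.Ioo (0:ℝ) 1)
    (f f' f'' : ℝ → ℝ)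
    (hmaps : Set.MapsTo f (Set.Icc a b) (Set.Icc a b))
    (hd1 : ∀ x ∈ Set.Icc a b, HasDerivAt f (f' x) x)
    (hd2 : ∀ x ∈ Set.Icc a b, HasDerivAt f' (f'' x) x)
    (hpos : ∀ x ∈ Set.Icc a b, 0 < f' x)
    (hle : ∀ x ∈ Set.Icc a b, f' x ≤ ν)
    (hN : ∀ x ∈ Set.Icc a b, |f'' x / f' x| ≤ C₁) :
    ∀ k : ℕ, 1 ≤ k → ∀ x ∈ Set.Icc a b,
      HasDerivAt (f^[k]) (∏ j ∈ Finset.range k, f' (f^[j] x)) x ∧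
      ∃ d : ℝ,
        HasDerivAt (fun y => ∏ j ∈ Finset.range k, f' (f^[j] y)) d x ∧
        |d / (∏ j ∈ Finset.range k, f' (f^[j] x))| ≤ C₁ / (1 - ν) :=
  nonlinearity_of_iterates_uniformly_bounded_general a b ν C₁ hν f f' f'' hmaps hd1 hd2 hpos hle hN
end

section
/- Let J be a compact interval, ν ∈ (0,1), and let f : J → ℝ be a three times differentiable map with f(J) ⊆ J and 0 < Df(x) ≤ ν for all x ∈ J. If |Sf(x)| ≤ C for all x ∈ J, then for every k ≥ 1 and every x ∈ J, |Sf^k(x)| ≤ C/(1 − ν²). That is, the Schwarzian derivatives of all iterates of f are uniformly bounded in terms of the bound on Sf and ν. -/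
/-!
Writing `Df^k = ∏_{j<k} Df ∘ f^j`, the chain rule gives `Df^(k+1) = (Df^k ∘ f) · Df`, and the
Schwarzian obeys the cocycle rule `S(g ∘ f) = (Sg ∘ f) · (Df)² + Sf`. Hence
`|Sf^(k+1)| ≤ ν² |Sf^k ∘ f| + C`, so `|Sf^k| ≤ C (1 + ν² + … + ν^(2(k-1))) ≤ C / (1 - ν²)`.
-/

open Set

/-- `schwarzianOfDerivs (Df x) (D²f x) (D³f x)` is the Schwarzian `Sf x`. -/
noncomputable def schwarzianOfDerivs (d₁ d₂ d₃ : ℝ) : ℝ := d₃ / d₁ - 3 / 2 * (d₂ / d₁) ^ 2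

theorem schwarzianOfDerivs_comp {p p₁ p₂ q q₁ q₂ : ℝ} (hp : p ≠ 0) (hq : q ≠ 0) :
    schwarzianOfDerivs (p * q) (p₁ * q ^ 2 + p * q₁) (p₂ * q ^ 3 + 3 * p₁ * q₁ * q + p * q₂) =
      schwarzianOfDerivs p p₁ p₂ * q ^ 2 + schwarzianOfDerivs q q₁ q₂ := by
  unfold schwarzianOfDerivs
  field_simp
  ring

section ChainRule

variable {g g₁ g₂ f f₁ f₂ f₃ : ℝ → ℝ} {y : ℝ}

theorem hasDerivAt_comp_mul_deriv (hg : HasDerivAt g (g₁ (f y)) (f y))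
    (hf : HasDerivAt f (f₁ y) y) (hf₁ : HasDerivAt f₁ (f₂ y) y) :
    HasDerivAt (fun z => g (f z) * f₁ z) (g₁ (f y) * f₁ y ^ 2 + g (f y) * f₂ y) y :=
  ((hg.comp y hf).mul hf₁).congr_deriv (by simp only [Function.comp_apply]; ring)

theorem hasDerivAt_deriv_comp_mul_deriv (hg : HasDerivAt g (g₁ (f y)) (f y))
    (hg₁ : HasDerivAt g₁ (g₂ (f y)) (f y)) (hf : HasDerivAt f (f₁ y) y)
    (hf₁ : HasDerivAt f₁ (f₂ y) y) (hf₂ : HasDerivAt f₂ (f₃ y) y) :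
    HasDerivAt (fun z => g₁ (f z) * f₁ z ^ 2 + g (f z) * f₂ z)
      (g₂ (f y) * f₁ y ^ 3 + 3 * g₁ (f y) * f₂ y * f₁ y + g (f y) * f₃ y) y :=
  (((hg₁.comp y hf).mul (hf₁.pow 2)).add ((hg.comp y hf).mul hf₂)).congr_deriv (by
    simp only [Function.comp_apply, Pi.pow_apply]; ring)

end ChainRule

theorem prod_range_succ_iterate_eq_comp_mul (f f' : ℝ → ℝ) (k : ℕ) (z : ℝ) :
    ∏ j ∈ Finset.range (k + 1), f' (f^[j] z) = (∏ j ∈ Finset.range k, f' (f^[j] (f z))) * f' z := by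
  rw [Finset.prod_range_succ']
  simp only [Function.iterate_succ_apply, Function.iterate_zero_apply]

theorem abs_schwarzian_iterate_le_geom_sum {s : Set ℝ} {ρ C : ℝ} {f f' f'' f''' : ℝ → ℝ}
    (hmaps : MapsTo f s s)
    (hd1 : ∀ x ∈ s, HasDerivAt f (f' x) x)
    (hd2 : ∀ x ∈ s, HasDerivAt f' (f'' x) x)
    (hd3 : ∀ x ∈ s, HasDerivAt f'' (f''' x) x)
    (hne : ∀ x ∈ s, f' x ≠ 0)
    (hle : ∀ x ∈ s, f' x ^ 2 ≤ ρ)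
    (hS : ∀ x ∈ s, |schwarzianOfDerivs (f' x) (f'' x) (f''' x)| ≤ C) (k : ℕ) :
    ∃ D2 d3 : ℝ → ℝ,
      (∀ y ∈ s, HasDerivAt (fun z => ∏ j ∈ Finset.range k, f' (f^[j] z)) (D2 y) y) ∧
      (∀ y ∈ s, HasDerivAt D2 (d3 y) y) ∧
      ∀ y ∈ s, |schwarzianOfDerivs (∏ j ∈ Finset.range k, f' (f^[j] y)) (D2 y) (d3 y)| ≤
        C * ∑ j ∈ Finset.range k, ρ ^ j := by
  induction k with
  | zero =>
    refine ⟨fun _ => 0, fun _ => 0, fun y _ => ?_, fun y _ => hasDerivAt_const y 0, fun y _ => ?_⟩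
    · simpa using hasDerivAt_const y (1 : ℝ)
    · simp [schwarzianOfDerivs]
  | succ k ih =>
    obtain ⟨D2, d3, hP, hD2, hSk⟩ := ih
    set P : ℝ → ℝ := fun z => ∏ j ∈ Finset.range k, f' (f^[j] z)
    refine ⟨fun z => D2 (f z) * f' z ^ 2 + P (f z) * f'' z,
      fun z => d3 (f z) * f' z ^ 3 + 3 * D2 (f z) * f'' z * f' z + P (f z) * f''' z,
      fun y hy => ?_, fun y hy => ?_, fun y hy => ?_⟩
    · simpa only [prod_range_succ_iterate_eq_comp_mul] using
        hasDerivAt_comp_mul_deriv (hP _ (hmaps hy)) (hd1 y hy) (hd2 y hy)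
    · exact hasDerivAt_deriv_comp_mul_deriv (hP _ (hmaps hy)) (hD2 _ (hmaps hy)) (hd1 y hy)
        (hd2 y hy) (hd3 y hy)
    · have hPne : P (f y) ≠ 0 :=
        Finset.prod_ne_zero_iff.2 fun j _ => hne _ (hmaps.iterate j (hmaps hy))
      have hρ : 0 ≤ ρ := (sq_nonneg _).trans (hle y hy)
      rw [prod_range_succ_iterate_eq_comp_mul, schwarzianOfDerivs_comp hPne (hne y hy)]
      calc _ ≤ |schwarzianOfDerivs (P (f y)) (D2 (f y)) (d3 (f y))| * f' y ^ 2
              + |schwarzianOfDerivs (f' y) (f'' y) (f''' y)| := by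
            refine (abs_add_le _ _).trans_eq ?_
            rw [abs_mul, abs_sq]
        _ ≤ (C * ∑ j ∈ Finset.range k, ρ ^ j) * ρ + C := by
            gcongr
            exacts [(abs_nonneg _).trans (hSk _ (hmaps hy)), hSk _ (hmaps hy), hle y hy, hS y hy]
        _ = C * ∑ j ∈ Finset.range (k + 1), ρ ^ j := by
            rw [geom_sum_succ]
            ring

theorem schwarzian_of_iterates_uniformly_bounded_general
    (a b ν C : ℝ) (hν : ν ∈ Set.Ioo (0:ℝ) 1)
    (f f' f'' f''' : ℝ → ℝ)
    (hmaps : Set.MapsTo f (Set.Icc a b) (Set.Icc a b))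
    (hd1 : ∀ x ∈ Set.Icc a b, HasDerivAt f (f' x) x)
    (hd2 : ∀ x ∈ Set.Icc a b, HasDerivAt f' (f'' x) x)
    (hd3 : ∀ x ∈ Set.Icc a b, HasDerivAt f'' (f''' x) x)
    (hpos : ∀ x ∈ Set.Icc a b, 0 < f' x)
    (hle : ∀ x ∈ Set.Icc a b, f' x ≤ ν)
    (hS : ∀ x ∈ Set.Icc a b,
        |f''' x / f' x - (3/2) * (f'' x / f' x)^2| ≤ C) :
    ∀ k : ℕ, 1 ≤ k → ∀ x ∈ Set.Icc a b,
      ∃ D2 : ℝ → ℝ, ∃ d3 : ℝ,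
        (∀ y ∈ Set.Icc a b,
          HasDerivAt (fun z => ∏ j ∈ Finset.range k, f' (f^[j] z)) (D2 y) y) ∧
        HasDerivAt D2 d3 x ∧
        |d3 / (∏ j ∈ Finset.range k, f' (f^[j] x))
            - (3/2) * (D2 x / ∏ j ∈ Finset.range k, f' (f^[j] x))^2|
          ≤ C / (1 - ν^2) := by
  intro k _ x hx
  obtain ⟨D2, d3, hP, hD2, hSk⟩ := abs_schwarzian_iterate_le_geom_sum hmaps hd1 hd2 hd3
    (fun y hy => (hpos y hy).ne') (fun y hy => pow_le_pow_left₀ (hpos y hy).le (hle y hy) 2) hS k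
  refine ⟨D2, d3 x, hP, hD2 x hx, (hSk x hx).trans ?_⟩
  have hC : 0 ≤ C := (abs_nonneg _).trans (hS x hx)
  have hν2 : ν ^ 2 < 1 := pow_lt_one₀ hν.1.le hν.2 two_ne_zero
  have hgeom : ∑ j ∈ Finset.range k, (ν ^ 2) ^ j ≤ 1 / (1 - ν ^ 2) := by
    simpa only [Finset.range_eq_Ico, pow_zero] using
      geom_sum_Ico_le_of_lt_one (m := 0) (n := k) (sq_nonneg ν) hν2
  calc C * ∑ j ∈ Finset.range k, (ν ^ 2) ^ j ≤ C * (1 / (1 - ν ^ 2)) :=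
        mul_le_mul_of_nonneg_left hgeom hC
    _ = C / (1 - ν ^ 2) := mul_one_div _ _

/-- Uniform bound on the Schwarzian derivatives of iterates: if `0 < Df ≤ ν < 1` and
`|Sf| ≤ C` on the compact invariant interval `J = [a,b]`, then `|Sf^k| ≤ C/(1−ν²)` for
every `k ≥ 1`.  Here `Df^k = ∏_{j<k} f' ∘ f^[j]`, `D2` is its derivative (`D²f^k`),
`d3 = D³f^k(x)`, and `Sf^k(x) = D³f^k(x)/Df^k(x) − (3/2)(D²f^k(x)/Df^k(x))²`. -/
theorem schwarzian_of_iterates_uniformly_bounded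
    (a b ν C : ℝ) (hab : a < b) (hν : ν ∈ Set.Ioo (0:ℝ) 1)
    (f f' f'' f''' : ℝ → ℝ)
    (hmaps : Set.MapsTo f (Set.Icc a b) (Set.Icc a b))
    (hd1 : ∀ x ∈ Set.Icc a b, HasDerivAt f (f' x) x)
    (hd2 : ∀ x ∈ Set.Icc a b, HasDerivAt f' (f'' x) x)
    (hd3 : ∀ x ∈ Set.Icc a b, HasDerivAt f'' (f''' x) x)
    (hpos : ∀ x ∈ Set.Icc a b, 0 < f' x)
    (hle : ∀ x ∈ Set.Icc a b, f' x ≤ ν)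
    (hS : ∀ x ∈ Set.Icc a b,
        |f''' x / f' x - (3/2) * (f'' x / f' x)^2| ≤ C) :
    ∀ k : ℕ, 1 ≤ k → ∀ x ∈ Set.Icc a b,
      ∃ D2 : ℝ → ℝ, ∃ d3 : ℝ,
        (∀ y ∈ Set.Icc a b,
          HasDerivAt (fun z => ∏ j ∈ Finset.range k, f' (f^[j] z)) (D2 y) y) ∧
        HasDerivAt D2 d3 x ∧
        |d3 / (∏ j ∈ Finset.range k, f' (f^[j] x))
            - (3/2) * (D2 x / ∏ j ∈ Finset.range k, f' (f^[j] x))^2|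
          ≤ C / (1 - ν^2) :=
  schwarzian_of_iterates_uniformly_bounded_general a b ν C hν f f' f'' f''' hmaps hd1 hd2 hd3 hpos
    hle hS
end

section
/- Let J be a compact interval, ν ∈ (0,1), and let f : J → ℝ be a three times differentiable map with f(J) ⊆ J and 0 < Df(x) ≤ ν for all x ∈ J, and suppose |Nf(x)| ≤ C₁ and |Sf(x)| ≤ C₂ for all x ∈ J. Then for every k ≥ 1 and every x ∈ J, |D³f^k(x)| ≤ ν^k · ( C₂/(1 − ν²) + (3/2)·(C₁/(1 − ν))² ). In particular, the third derivatives of the iterates f^k converge uniformly to 0 as k → ∞. -/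
open Set

/-- Decay of third derivatives of iterates: if `0 < Df ≤ ν < 1`, `|Nf| ≤ C₁` and
`|Sf| ≤ C₂` on the compact invariant interval `J = [a,b]`, then
`|D³f^k(x)| ≤ ν^k · (C₂/(1−ν²) + (3/2)(C₁/(1−ν))²)` for all `k ≥ 1` and `x ∈ J`;
in particular `D³f^k → 0` uniformly.  Here `Df^k = ∏_{j<k} f' ∘ f^[j]`, `D2` is its
derivative (`D²f^k`) and `d3 = D³f^k(x)`. -/
theorem third_derivative_of_iterates_tendsto_zero
    (a b ν C₁ C₂ : ℝ) (hab : a < b) (hν : ν ∈ Set.Ioo (0:ℝ) 1)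
    (f f' f'' f''' : ℝ → ℝ)
    (hmaps : Set.MapsTo f (Set.Icc a b) (Set.Icc a b))
    (hd1 : ∀ x ∈ Set.Icc a b, HasDerivAt f (f' x) x)
    (hd2 : ∀ x ∈ Set.Icc a b, HasDerivAt f' (f'' x) x)
    (hd3 : ∀ x ∈ Set.Icc a b, HasDerivAt f'' (f''' x) x)
    (hpos : ∀ x ∈ Set.Icc a b, 0 < f' x)
    (hle : ∀ x ∈ Set.Icc a b, f' x ≤ ν)
    (hN : ∀ x ∈ Set.Icc a b, |f'' x / f' x| ≤ C₁)
    (hS : ∀ x ∈ Set.Icc a b,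
        |f''' x / f' x - (3/2) * (f'' x / f' x)^2| ≤ C₂) :
    ∀ k : ℕ, 1 ≤ k → ∀ x ∈ Set.Icc a b,
      ∃ D2 : ℝ → ℝ, ∃ d3 : ℝ,
        (∀ y ∈ Set.Icc a b,
          HasDerivAt (fun z => ∏ j ∈ Finset.range k, f' (f^[j] z)) (D2 y) y) ∧
        HasDerivAt D2 d3 x ∧
        |d3| ≤ ν ^ k * (C₂ / (1 - ν^2) + (3/2) * (C₁ / (1 - ν))^2) := by
  obtain ⟨hν0, hν1⟩ := hν
  have haJ : a ∈ Set.Icc a b := ⟨le_refl a, hab.le⟩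
  have hC₁0 : 0 ≤ C₁ := le_trans (abs_nonneg _) (hN a haJ)
  have hC₂0 : 0 ≤ C₂ := le_trans (abs_nonneg _) (hS a haJ)
  have h1ν : (0:ℝ) < 1 - ν := by linarith
  have h1ν2 : (0:ℝ) < 1 - ν^2 := by nlinarith
  set J := Set.Icc a b with hJdef
  let g : ℕ → ℝ → ℝ := fun k z => ∏ j ∈ Finset.range k, f' (f^[j] z)
  have hiter : ∀ (j : ℕ), Set.MapsTo (f^[j]) J J := fun j => hmaps.iterate j
  have hgpos : ∀ k, ∀ y ∈ J, 0 < g k y := fun k y hy =>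
    Finset.prod_pos fun j _ => hpos _ (hiter j hy)
  have hgle : ∀ k, ∀ y ∈ J, g k y ≤ ν ^ k := by
    intro k y hy
    calc g k y ≤ ∏ _j ∈ Finset.range k, ν :=
          Finset.prod_le_prod (fun j _ => (hpos _ (hiter j hy)).le)
            (fun j _ => hle _ (hiter j hy))
    _ = ν ^ k := by simp
  have key : ∀ k : ℕ, ∃ D2 D3 : ℝ → ℝ,
      (∀ y ∈ J, HasDerivAt (g k) (D2 y) y) ∧
      (∀ y ∈ J, HasDerivAt D2 (D3 y) y) ∧
      (∀ y ∈ J, |D2 y / g k y| ≤ C₁ * ∑ j ∈ Finset.range k, ν ^ j) ∧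
      (∀ y ∈ J, |D3 y / g k y - (3/2) * (D2 y / g k y)^2| ≤
        C₂ * ∑ j ∈ Finset.range k, (ν^2) ^ j) := by
    intro k
    induction k with
    | zero =>
      refine ⟨fun _ => 0, fun _ => 0, ?_, ?_, ?_, ?_⟩
      · intro y _
        have hg0 : g 0 = fun _ : ℝ => (1:ℝ) := by funext z; simp [g]
        rw [hg0]; exact hasDerivAt_const y 1
      · intro y _; exact hasDerivAt_const y 0
      · intro y _; simp
      · intro y _; simp
    | succ k ih =>
      obtain ⟨D2, D3, hD2, hD3, hB1, hB2⟩ := ih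
      have hgs : g (k+1) = fun z => g k (f z) * f' z := by
        funext z
        show ∏ j ∈ Finset.range (k+1), f' (f^[j] z) = _
        rw [Finset.prod_range_succ']
        simp [g, Function.iterate_succ_apply]
      refine ⟨fun y => D2 (f y) * f' y * f' y + g k (f y) * f'' y,
        fun y => (D3 (f y) * f' y * f' y + D2 (f y) * f'' y) * f' y +
          D2 (f y) * f' y * f'' y +
          ((D2 (f y) * f' y * f'' y + g k (f y) * f''' y)), ?_, ?_, ?_, ?_⟩
      · intro y hy
        have hfy : f y ∈ J := hmaps hy
        rw [hgs]
        have h1 : HasDerivAt (fun z => g k (f z)) (D2 (f y) * f' y) y :=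
          (hD2 (f y) hfy).comp y (hd1 y hy)
        exact h1.mul (hd2 y hy)
      · intro y hy
        have hfy : f y ∈ J := hmaps hy
        have h1 : HasDerivAt (fun z => g k (f z)) (D2 (f y) * f' y) y :=
          (hD2 (f y) hfy).comp y (hd1 y hy)
        have hA : HasDerivAt (fun z => D2 (f z)) (D3 (f y) * f' y) y :=
          (hD3 (f y) hfy).comp y (hd1 y hy)
        have hB : HasDerivAt (fun z => D2 (f z) * f' z)
            (D3 (f y) * f' y * f' y + D2 (f y) * f'' y) y := hA.mul (hd2 y hy)
        have hC : HasDerivAt (fun z => D2 (f z) * f' z * f' z)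
            ((D3 (f y) * f' y * f' y + D2 (f y) * f'' y) * f' y +
              D2 (f y) * f' y * f'' y) y := hB.mul (hd2 y hy)
        have hD : HasDerivAt (fun z => g k (f z) * f'' z)
            (D2 (f y) * f' y * f'' y + g k (f y) * f''' y) y := h1.mul (hd3 y hy)
        exact hC.add hD
      · intro y hy
        have hfy : f y ∈ J := hmaps hy
        have hu : 0 < f' y := hpos y hy
        have hG : 0 < g k (f y) := hgpos k _ hfy
        have hP : g (k+1) y = g k (f y) * f' y := by rw [hgs]
        have hid : (D2 (f y) * f' y * f' y + g k (f y) * f'' y) / g (k+1) y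
            = (D2 (f y) / g k (f y)) * f' y + f'' y / f' y := by
          rw [hP]; field_simp
        rw [hid, geom_sum_succ]
        have e1 : |(D2 (f y) / g k (f y)) * f' y| ≤ (C₁ * ∑ j ∈ Finset.range k, ν ^ j) * ν := by
          rw [abs_mul, abs_of_pos hu]
          exact mul_le_mul (hB1 _ hfy) (hle y hy) hu.le
            (mul_nonneg hC₁0 (Finset.sum_nonneg fun j _ => pow_nonneg hν0.le j))
        have e2 := hN y hy
        calc |(D2 (f y) / g k (f y)) * f' y + f'' y / f' y|
            ≤ |(D2 (f y) / g k (f y)) * f' y| + |f'' y / f' y| := abs_add_le _ _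
          _ ≤ (C₁ * ∑ j ∈ Finset.range k, ν ^ j) * ν + C₁ := by linarith
          _ = C₁ * (ν * ∑ j ∈ Finset.range k, ν ^ j + 1) := by ring
      · intro y hy
        have hfy : f y ∈ J := hmaps hy
        have hu : 0 < f' y := hpos y hy
        have hG : 0 < g k (f y) := hgpos k _ hfy
        have hP : g (k+1) y = g k (f y) * f' y := by rw [hgs]
        have hid :
            ((D3 (f y) * f' y * f' y + D2 (f y) * f'' y) * f' y +
              D2 (f y) * f' y * f'' y +
              ((D2 (f y) * f' y * f'' y + g k (f y) * f''' y))) / g (k+1) y -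
            (3/2) * ((D2 (f y) * f' y * f' y + g k (f y) * f'' y) / g (k+1) y)^2
            = (f''' y / f' y - (3/2) * (f'' y / f' y)^2) +
              (f' y)^2 * (D3 (f y) / g k (f y) - (3/2) * (D2 (f y) / g k (f y))^2) := by
          rw [hP]; field_simp; ring
        rw [hid, geom_sum_succ]
        have e1 : |(f' y)^2 * (D3 (f y) / g k (f y) - (3/2) * (D2 (f y) / g k (f y))^2)|
            ≤ ν^2 * (C₂ * ∑ j ∈ Finset.range k, (ν^2) ^ j) := by
          rw [abs_mul, abs_of_pos (pow_pos hu 2)]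
          exact mul_le_mul (by nlinarith [hle y hy, hu.le]) (hB2 _ hfy) (abs_nonneg _)
            (by positivity)
        have e2 := hS y hy
        calc |(f''' y / f' y - (3/2) * (f'' y / f' y)^2) +
              (f' y)^2 * (D3 (f y) / g k (f y) - (3/2) * (D2 (f y) / g k (f y))^2)|
            ≤ |f''' y / f' y - (3/2) * (f'' y / f' y)^2| +
              |(f' y)^2 * (D3 (f y) / g k (f y) - (3/2) * (D2 (f y) / g k (f y))^2)| :=
              abs_add_le _ _
          _ ≤ C₂ + ν^2 * (C₂ * ∑ j ∈ Finset.range k, (ν^2) ^ j) := by linarith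
          _ = C₂ * (ν^2 * ∑ j ∈ Finset.range k, (ν^2) ^ j + 1) := by ring
  intro k hk x hx
  obtain ⟨D2, D3, hD2, hD3, hB1, hB2⟩ := key k
  refine ⟨D2, D3 x, hD2, hD3 x hx, ?_⟩
  have hS1 : ∑ j ∈ Finset.range k, ν ^ j ≤ 1 / (1 - ν) := by
    rw [geom_sum_eq hν1.ne k]
    have : (ν ^ k - 1) / (ν - 1) = (1 - ν ^ k) / (1 - ν) := by
      rw [div_eq_div_iff (by linarith) (by linarith)]; ring
    rw [this]
    exact div_le_div_of_nonneg_right (by nlinarith [pow_nonneg hν0.le k]) h1ν.le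
  have hS2 : ∑ j ∈ Finset.range k, (ν^2) ^ j ≤ 1 / (1 - ν^2) := by
    have hν2ne : ν^2 ≠ 1 := by nlinarith
    rw [geom_sum_eq hν2ne k]
    have : ((ν^2) ^ k - 1) / (ν^2 - 1) = (1 - (ν^2) ^ k) / (1 - ν^2) := by
      rw [div_eq_div_iff (by nlinarith) (by linarith)]; ring
    rw [this]
    exact div_le_div_of_nonneg_right (by nlinarith [pow_nonneg (sq_nonneg ν) k]) h1ν2.le
  have hP : 0 < g k x := hgpos k x hx
  have hPν : g k x ≤ ν ^ k := hgle k x hx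
  have hb1 := hB1 x hx
  have hb2 := hB2 x hx
  have hr : |D2 x / g k x| ≤ C₁ / (1 - ν) := by
    refine hb1.trans ?_
    rw [div_eq_mul_inv, ← one_div]
    exact mul_le_mul_of_nonneg_left hS1 hC₁0
  have hs : |D3 x / g k x| ≤ C₂ / (1 - ν^2) + (3/2) * (C₁ / (1 - ν))^2 := by
    have h1 : |D3 x / g k x| ≤ |D3 x / g k x - (3/2) * (D2 x / g k x)^2| +
        (3/2) * (D2 x / g k x)^2 := by
      have := abs_add_le (D3 x / g k x - (3/2) * (D2 x / g k x)^2) ((3/2) * (D2 x / g k x)^2)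
      simpa [abs_of_nonneg (by positivity : (0:ℝ) ≤ (3/2) * (D2 x / g k x)^2)] using this
    have h2 : (D2 x / g k x)^2 ≤ (C₁ / (1 - ν))^2 := by
      rw [← sq_abs]
      exact pow_le_pow_left₀ (abs_nonneg _) hr 2
    have h3 : C₂ * ∑ j ∈ Finset.range k, (ν^2) ^ j ≤ C₂ / (1 - ν^2) := by
      rw [div_eq_mul_inv, ← one_div]
      exact mul_le_mul_of_nonneg_left hS2 hC₂0
    linarith
  have hD3x : D3 x = g k x * (D3 x / g k x) := by field_simp
  rw [hD3x, abs_mul, abs_of_pos hP]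
  exact mul_le_mul hPν hs (abs_nonneg _) (pow_nonneg hν0.le k)
end

section
/- Fix x ∈ [0,1]. The evaluation operator E : C([0,1], ℝ) → ℝ defined by E(η) = φ_η(x), where φ_η(x) = (∫₀ˣ exp(∫₀ˢ η(t) dt) ds)/(∫₀¹ exp(∫₀ˢ η(t) dt) ds), is Fréchet differentiable at every η ∈ C([0,1], ℝ) (with respect to the supremum norm), and its derivative is the bounded linear map Δη ↦ ( (∫₀ˣ (∫₀ˢ Δη(t) dt) · exp(∫₀ˢ η(t) dt) ds) / (∫₀ˣ exp(∫₀ˢ η(t) dt) ds) − (∫₀¹ (∫₀ˢ Δη(t) dt) · exp(∫₀ˢ η(t) dt) ds) / (∫₀¹ exp(∫₀ˢ η(t) dt) ds) ) · φ_η(x). -/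
/-!
Write `φ_ζ(x) = N(ζ) / D(ζ)` with `N(ζ) = ∫₀ˣ exp (ℓ_s ζ) ds`, `D(ζ) = ∫₀¹ exp (ℓ_s ζ) ds`, where
`ℓ_s ζ = ∫₀ˢ ζ` is a continuous linear functional depending 1-Lipschitz on `s`. Differentiating
under the integral sign (the functionals `ℓ_s`, `s` in a compact interval, are uniformly bounded,
which gives the domination) yields `N' = ∫₀ˣ exp (ℓ_s η) • ℓ_s ds` and likewise `D'`, and the
quotient rule gives `(N'/N - D'/D) · N/D`.
-/

open Set MeasureTheory

/-- Extension of a continuous function on `[0,1]` to `ℝ` (constant outside `[0,1]`). -/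
noncomputable def extIcc (η : C(Set.Icc (0:ℝ) 1, ℝ)) : ℝ → ℝ :=
  fun t => η (Set.projIcc (0:ℝ) 1 zero_le_one t)

/-- The diffeomorphism of `[0,1]` with nonlinearity `η`:
`φ_η(x) = (∫₀ˣ exp(∫₀ˢ η)) / (∫₀¹ exp(∫₀ˢ η))`. -/
noncomputable def phiEta (η : C(Set.Icc (0:ℝ) 1, ℝ)) (x : ℝ) : ℝ :=
  (∫ s in (0:ℝ)..x, Real.exp (∫ t in (0:ℝ)..s, extIcc η t)) /
  (∫ s in (0:ℝ)..1, Real.exp (∫ t in (0:ℝ)..s, extIcc η t))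

theorem HasFDerivAt.div {𝕜 E : Type*} [NontriviallyNormedField 𝕜] [NormedAddCommGroup E]
    [NormedSpace 𝕜 E] {f g : E → 𝕜} {f' g' : E →L[𝕜] 𝕜} {x : E} (hf : HasFDerivAt f f' x)
    (hg : HasFDerivAt g g' x) (hx : g x ≠ 0) :
    HasFDerivAt (fun y => f y / g y) ((g x)⁻¹ • f' - (f x / g x ^ 2) • g') x := by
  simp only [div_eq_mul_inv]
  refine (hf.fun_mul ((hasDerivAt_inv hx).comp_hasFDerivAt x hg)).congr_fderiv ?_
  ext y
  simp only [sub_apply, add_apply, smul_apply, smul_eq_mul, Function.comp_apply]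
  ring

namespace PhiEta

variable {E : Type*} [NormedAddCommGroup E] [NormedSpace ℝ E]

theorem hasFDerivAt_integral_exp_apply {ℓ : ℝ → E →L[ℝ] ℝ} (hℓ : Continuous ℓ) (η : E) (a b : ℝ) :
    HasFDerivAt (fun ζ => ∫ s in a..b, Real.exp (ℓ s ζ))
      (∫ s in a..b, Real.exp (ℓ s η) • ℓ s) η := by
  have hF (ζ : E) : Continuous fun s => Real.exp (ℓ s ζ) := by fun_prop
  have hF' : Continuous fun s => Real.exp (ℓ s η) • ℓ s := by fun_prop
  obtain ⟨C, hC⟩ := (isCompact_uIcc (a := a) (b := b)).exists_bound_of_continuousOn hℓ.continuousOn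
  refine hasFDerivAt_integral_of_dominated_of_fderiv_le'' (F := fun ζ s => Real.exp (ℓ s ζ))
    (F' := fun ζ s => Real.exp (ℓ s ζ) • ℓ s) (bound := fun _ => Real.exp (C * (‖η‖ + 1)) * C)
    (Metric.ball_mem_nhds η one_pos) (.of_forall fun ζ => (hF ζ).aestronglyMeasurable)
    ((hF η).intervalIntegrable _ _) hF'.aestronglyMeasurable ?_ intervalIntegrable_const
    (ae_of_all _ fun s ζ _ => (ℓ s).hasFDerivAt.exp)
  filter_upwards [ae_restrict_mem measurableSet_uIoc] with s hs ζ hζ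
  have hℓs := hC s (uIoc_subset_uIcc hs)
  have hζ' : ‖ζ‖ ≤ ‖η‖ + 1 := by
    have := norm_le_norm_add_norm_sub' ζ η
    rw [mem_ball_iff_norm] at hζ
    linarith
  have hexp : ℓ s ζ ≤ C * (‖η‖ + 1) := calc
    ℓ s ζ ≤ ‖ℓ s‖ * ‖ζ‖ := (le_abs_self _).trans ((ℓ s).le_opNorm ζ)
    _ ≤ C * (‖η‖ + 1) := by gcongr; exact (norm_nonneg _).trans hℓs
  calc ‖Real.exp (ℓ s ζ) • ℓ s‖ = Real.exp (ℓ s ζ) * ‖ℓ s‖ := by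
        rw [norm_smul, Real.norm_of_nonneg (Real.exp_pos _).le]
    _ ≤ Real.exp (C * (‖η‖ + 1)) * C := by gcongr

theorem integral_exp_smul_apply {ℓ : ℝ → E →L[ℝ] ℝ} (hℓ : Continuous ℓ) (η Δ : E) (a b : ℝ) :
    (∫ s in a..b, Real.exp (ℓ s η) • ℓ s) Δ = ∫ s in a..b, ℓ s Δ * Real.exp (ℓ s η) := by
  have hF' : Continuous fun s => Real.exp (ℓ s η) • ℓ s := by fun_prop
  rw [ContinuousLinearMap.intervalIntegral_apply (hF'.intervalIntegrable a b)]
  simp only [smul_apply, smul_eq_mul, mul_comm]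

theorem integral_exp_ne_zero {f : ℝ → ℝ} (hf : Continuous f) {a b : ℝ} (hab : a ≠ b) :
    ∫ s in a..b, Real.exp (f s) ≠ 0 := by
  have hint := fun u v => (Real.continuous_exp.comp hf).intervalIntegrable (μ := volume) u v
  rcases hab.lt_or_gt with hab | hba
  · exact (intervalIntegral.intervalIntegral_pos_of_pos (hint a b) (fun _ => Real.exp_pos _) hab).ne'
  · rw [intervalIntegral.integral_symm, neg_ne_zero]
    exact (intervalIntegral.intervalIntegral_pos_of_pos (hint b a) (fun _ => Real.exp_pos _) hba).ne'

theorem continuous_extIcc (ζ : C(Icc (0:ℝ) 1, ℝ)) : Continuous (extIcc ζ) :=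
  ζ.continuous.comp continuous_projIcc

theorem norm_integral_extIcc_le (ζ : C(Icc (0:ℝ) 1, ℝ)) (a b : ℝ) :
    ‖∫ t in a..b, extIcc ζ t‖ ≤ ‖ζ‖ * |b - a| :=
  intervalIntegral.norm_integral_le_of_norm_le_const fun _ _ => ζ.norm_coe_le_norm _

noncomputable def primitiveCLM (s : ℝ) : C(Icc (0:ℝ) 1, ℝ) →L[ℝ] ℝ :=
  LinearMap.mkContinuous
    { toFun := fun ζ => ∫ t in (0:ℝ)..s, extIcc ζ t
      map_add' := fun ζ ξ => intervalIntegral.integral_add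
        ((continuous_extIcc ζ).intervalIntegrable _ _) ((continuous_extIcc ξ).intervalIntegrable _ _)
      map_smul' := fun c ζ => intervalIntegral.integral_smul c _ }
    |s| fun ζ => (norm_integral_extIcc_le ζ 0 s).trans_eq (by rw [sub_zero, mul_comm])

theorem primitiveCLM_apply (s : ℝ) (ζ : C(Icc (0:ℝ) 1, ℝ)) :
    primitiveCLM s ζ = ∫ t in (0:ℝ)..s, extIcc ζ t := rfl

theorem lipschitzWith_primitiveCLM : LipschitzWith 1 primitiveCLM := by
  refine .of_dist_le_mul fun s s' => ?_
  rw [NNReal.coe_one, one_mul, dist_eq_norm, Real.dist_eq]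
  refine ContinuousLinearMap.opNorm_le_bound _ (abs_nonneg _) fun ζ => ?_
  rw [sub_apply, primitiveCLM_apply, primitiveCLM_apply,
    intervalIntegral.integral_interval_sub_left ((continuous_extIcc ζ).intervalIntegrable _ _)
      ((continuous_extIcc ζ).intervalIntegrable _ _), mul_comm]
  exact norm_integral_extIcc_le ζ s' s

theorem phiEta_eq (ζ : C(Icc (0:ℝ) 1, ℝ)) (x : ℝ) :
    phiEta ζ x = (∫ s in (0:ℝ)..x, Real.exp (primitiveCLM s ζ)) /
      ∫ s in (0:ℝ)..1, Real.exp (primitiveCLM s ζ) := rfl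

end PhiEta

open PhiEta in
theorem evaluation_operator_hasFDerivAt_general (x : ℝ)
    (η : C(Set.Icc (0:ℝ) 1, ℝ)) :
    ∃ L : C(Set.Icc (0:ℝ) 1, ℝ) →L[ℝ] ℝ,
      HasFDerivAt (fun ζ => phiEta ζ x) L η ∧
      ∀ Δη : C(Set.Icc (0:ℝ) 1, ℝ),
        L Δη =
          ((∫ s in (0:ℝ)..x, (∫ t in (0:ℝ)..s, extIcc Δη t) *
                Real.exp (∫ t in (0:ℝ)..s, extIcc η t)) /
              (∫ s in (0:ℝ)..x, Real.exp (∫ t in (0:ℝ)..s, extIcc η t)) -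
            (∫ s in (0:ℝ)..1, (∫ t in (0:ℝ)..s, extIcc Δη t) *
                Real.exp (∫ t in (0:ℝ)..s, extIcc η t)) /
              (∫ s in (0:ℝ)..1, Real.exp (∫ t in (0:ℝ)..s, extIcc η t)))
            * phiEta η x := by
  have hI := lipschitzWith_primitiveCLM.continuous
  have hD : ∫ s in (0:ℝ)..1, Real.exp (primitiveCLM s η) ≠ 0 :=
    integral_exp_ne_zero (hI.clm_apply continuous_const) zero_ne_one
  refine ⟨_, (hasFDerivAt_integral_exp_apply hI η 0 x).div
    (hasFDerivAt_integral_exp_apply hI η 0 1) hD, fun Δη => ?_⟩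
  simp only [sub_apply, smul_apply, smul_eq_mul,
    integral_exp_smul_apply hI, phiEta_eq, ← primitiveCLM_apply]
  rcases eq_or_ne x 0 with rfl | hx
  · simp
  · have hN := integral_exp_ne_zero (f := fun s => primitiveCLM s η)
      (hI.clm_apply continuous_const) hx.symm
    field_simp

/-- The evaluation operator `η ↦ φ_η(x)` on `C([0,1],ℝ)` (with the sup norm) is Fréchet
differentiable at every `η`, with derivative
`Δη ↦ ((∫₀ˣ (∫₀ˢ Δη) e^{∫₀ˢ η} ds)/(∫₀ˣ e^{∫₀ˢ η} ds)
      − (∫₀¹ (∫₀ˢ Δη) e^{∫₀ˢ η} ds)/(∫₀¹ e^{∫₀ˢ η} ds)) · φ_η(x)`.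
(For `x = 0` the first quotient is `0/0 = 0` in Lean, matching the convention.) -/
theorem evaluation_operator_hasFDerivAt (x : ℝ) (hx : x ∈ Set.Icc (0:ℝ) 1)
    (η : C(Set.Icc (0:ℝ) 1, ℝ)) :
    ∃ L : C(Set.Icc (0:ℝ) 1, ℝ) →L[ℝ] ℝ,
      HasFDerivAt (fun ζ => phiEta ζ x) L η ∧
      ∀ Δη : C(Set.Icc (0:ℝ) 1, ℝ),
        L Δη =
          ((∫ s in (0:ℝ)..x, (∫ t in (0:ℝ)..s, extIcc Δη t) *
                Real.exp (∫ t in (0:ℝ)..s, extIcc η t)) /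
              (∫ s in (0:ℝ)..x, Real.exp (∫ t in (0:ℝ)..s, extIcc η t)) -
            (∫ s in (0:ℝ)..1, (∫ t in (0:ℝ)..s, extIcc Δη t) *
                Real.exp (∫ t in (0:ℝ)..s, extIcc η t)) /
              (∫ s in (0:ℝ)..1, Real.exp (∫ t in (0:ℝ)..s, extIcc η t)))
            * phiEta η x :=
  evaluation_operator_hasFDerivAt_general x η
end

section
/- Let η, Δη ∈ C([0,1], ℝ), let φ = φ_η, and let x ∈ (0,1]. Then the following integral identity holds: ( (∫₀ˣ (∫₀ˢ Δη(t) dt) · exp(∫₀ˢ η(t) dt) ds)/(∫₀ˣ exp(∫₀ˢ η(t) dt) ds) − (∫₀¹ (∫₀ˢ Δη(t) dt) · exp(∫₀ˢ η(t) dt) ds)/(∫₀¹ exp(∫₀ˢ η(t) dt) ds) ) · φ(x) = φ(x)·∫₀¹ Δη(s)·φ(s) ds − φ(x)·∫ₓ¹ Δη(s) ds − ∫₀ˣ Δη(s)·φ(s) ds. In particular, for Δη ≡ 1 and η ≡ 0 (so φ(x) = x) this expression equals −x(1−x)/2. -/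
open Set MeasureTheory

/-- The integral identity for the derivative of the evaluation operator: with
`φ = φ_η`, for `x ∈ (0,1]`,
`((∫₀ˣ(∫₀ˢΔη)e^{∫₀ˢη})/(∫₀ˣe^{∫₀ˢη}) − (∫₀¹(∫₀ˢΔη)e^{∫₀ˢη})/(∫₀¹e^{∫₀ˢη})) · φ(x)
   = φ(x)·∫₀¹Δη·φ − φ(x)·∫ₓ¹Δη − ∫₀ˣΔη·φ`;
and in the particular case `Δη ≡ 1`, `η ≡ 0` (so `φ(x) = x`) the expression equals
`−x(1−x)/2`. -/
theorem evaluation_derivative_integral_identity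
    (η Δη : ℝ → ℝ)
    (hη : ContinuousOn η (Set.Icc 0 1))
    (hΔη : ContinuousOn Δη (Set.Icc 0 1))
    (x : ℝ) (hx : x ∈ Set.Ioc (0:ℝ) 1) :
    let φ : ℝ → ℝ := fun y =>
      (∫ s in (0:ℝ)..y, Real.exp (∫ t in (0:ℝ)..s, η t)) /
      (∫ s in (0:ℝ)..1, Real.exp (∫ t in (0:ℝ)..s, η t))
    ((∫ s in (0:ℝ)..x, (∫ t in (0:ℝ)..s, Δη t) * Real.exp (∫ t in (0:ℝ)..s, η t)) /
        (∫ s in (0:ℝ)..x, Real.exp (∫ t in (0:ℝ)..s, η t)) -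
      (∫ s in (0:ℝ)..1, (∫ t in (0:ℝ)..s, Δη t) * Real.exp (∫ t in (0:ℝ)..s, η t)) /
        (∫ s in (0:ℝ)..1, Real.exp (∫ t in (0:ℝ)..s, η t))) * φ x
      = φ x * (∫ s in (0:ℝ)..1, Δη s * φ s)
          - φ x * (∫ s in x..(1:ℝ), Δη s)
          - ∫ s in (0:ℝ)..x, Δη s * φ s ∧
    ((∫ s in (0:ℝ)..x, (∫ t in (0:ℝ)..s, (1:ℝ)) * Real.exp (∫ t in (0:ℝ)..s, (0:ℝ))) /
        (∫ s in (0:ℝ)..x, Real.exp (∫ t in (0:ℝ)..s, (0:ℝ))) -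
      (∫ s in (0:ℝ)..1, (∫ t in (0:ℝ)..s, (1:ℝ)) * Real.exp (∫ t in (0:ℝ)..s, (0:ℝ))) /
        (∫ s in (0:ℝ)..1, Real.exp (∫ t in (0:ℝ)..s, (0:ℝ)))) * x
      = -(x * (1 - x)) / 2 := by
  intro φ
  obtain ⟨hx0, hx1⟩ := hx
  constructor
  · -- main identity
    set E : ℝ → ℝ := fun s => Real.exp (∫ t in (0:ℝ)..s, η t) with hEdef
    set G : ℝ → ℝ := fun s => ∫ t in (0:ℝ)..s, Δη t with hGdef
    set F : ℝ → ℝ := fun y => ∫ s in (0:ℝ)..y, E s with hFdef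
    have huIcc : Set.uIcc (0:ℝ) 1 = Set.Icc 0 1 := Set.uIcc_of_le (by norm_num)
    -- continuity of primitives
    have hηint : IntegrableOn η (Set.Icc (0:ℝ) 1) := hη.integrableOn_Icc
    have hΔηint : IntegrableOn Δη (Set.Icc (0:ℝ) 1) := hΔη.integrableOn_Icc
    have hP : ContinuousOn (fun s => ∫ t in (0:ℝ)..s, η t) (Set.Icc 0 1) := by
      have := intervalIntegral.continuousOn_primitive_interval
        (f := η) (a := (0:ℝ)) (b := 1) (μ := volume) (by rwa [huIcc])
      rwa [huIcc] at this
    have hE : ContinuousOn E (Set.Icc 0 1) := Real.continuous_exp.comp_continuousOn hP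
    have hG : ContinuousOn G (Set.Icc 0 1) := by
      have := intervalIntegral.continuousOn_primitive_interval
        (f := Δη) (a := (0:ℝ)) (b := 1) (μ := volume) (by rwa [huIcc])
      rwa [huIcc] at this
    have hF : ContinuousOn F (Set.Icc 0 1) := by
      have := intervalIntegral.continuousOn_primitive_interval
        (f := E) (a := (0:ℝ)) (b := 1) (μ := volume) (by rw [huIcc]; exact hE.integrableOn_Icc)
      rwa [huIcc] at this
    have hEpos : ∀ s, 0 < E s := fun s => Real.exp_pos _
    -- interval integrability on subintervals of [0,1]
    have hsub : ∀ y ∈ Set.Icc (0:ℝ) 1, Set.uIcc (0:ℝ) y ⊆ Set.Icc 0 1 := by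
      intro y hy
      rw [Set.uIcc_of_le hy.1]
      exact Set.Icc_subset_Icc le_rfl hy.2
    have hxmem : x ∈ Set.Icc (0:ℝ) 1 := ⟨hx0.le, hx1⟩
    have h1mem : (1:ℝ) ∈ Set.Icc (0:ℝ) 1 := by norm_num
    have hEint : ∀ y ∈ Set.Icc (0:ℝ) 1, IntervalIntegrable E volume 0 y := fun y hy =>
      (hE.mono (hsub y hy)).intervalIntegrable
    have hΔint : ∀ y ∈ Set.Icc (0:ℝ) 1, IntervalIntegrable Δη volume 0 y := fun y hy =>
      (hΔη.mono (hsub y hy)).intervalIntegrable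
    -- derivatives on the interior
    have hG' : ∀ s ∈ Set.Ioo (0:ℝ) 1, HasDerivAt G (Δη s) s := by
      intro s hs
      exact intervalIntegral.integral_hasDerivAt_right
        (hΔint s (Set.Ioo_subset_Icc_self hs))
        ((hΔη.mono Set.Ioo_subset_Icc_self).stronglyMeasurableAtFilter isOpen_Ioo s hs)
        (hΔη.continuousAt (Icc_mem_nhds hs.1 hs.2))
    have hF' : ∀ s ∈ Set.Ioo (0:ℝ) 1, HasDerivAt F (E s) s := by
      intro s hs
      exact intervalIntegral.integral_hasDerivAt_right
        (hEint s (Set.Ioo_subset_Icc_self hs))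
        ((hE.mono Set.Ioo_subset_Icc_self).stronglyMeasurableAtFilter isOpen_Ioo s hs)
        (hE.continuousAt (Icc_mem_nhds hs.1 hs.2))
    -- integration by parts
    have hparts : ∀ y ∈ Set.Icc (0:ℝ) 1,
        (∫ s in (0:ℝ)..y, Δη s * F s) = G y * F y - ∫ s in (0:ℝ)..y, G s * E s := by
      intro y hy
      have hminmax : Set.Ioo (min (0:ℝ) y) (max 0 y) ⊆ Set.Ioo 0 1 := by
        rw [min_eq_left hy.1, max_eq_right hy.1]
        exact Set.Ioo_subset_Ioo le_rfl hy.2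
      have key := intervalIntegral.integral_deriv_mul_eq_sub_of_hasDerivAt
        (u := G) (v := F) (u' := Δη) (v' := E) (a := (0:ℝ)) (b := y)
        (hG.mono (hsub y hy)) (hF.mono (hsub y hy))
        (fun s hs => hG' s (hminmax hs)) (fun s hs => hF' s (hminmax hs))
        (hΔint y hy) (hEint y hy)
      have hG0 : G 0 = 0 := intervalIntegral.integral_same
      have hF0 : F 0 = 0 := intervalIntegral.integral_same
      rw [hG0, hF0, mul_zero, sub_zero] at key
      have hint1 : IntervalIntegrable (fun s => Δη s * F s) volume 0 y :=
        ((hΔη.mono (hsub y hy)).mul (hF.mono (hsub y hy))).intervalIntegrable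
      have hint2 : IntervalIntegrable (fun s => G s * E s) volume 0 y :=
        ((hG.mono (hsub y hy)).mul (hE.mono (hsub y hy))).intervalIntegrable
      have := intervalIntegral.integral_add hint1 hint2
      rw [this] at key
      linarith [key]
    -- positivity
    have hFpos : ∀ y ∈ Set.Ioc (0:ℝ) 1, 0 < F y := by
      intro y hy
      exact intervalIntegral.intervalIntegral_pos_of_pos_on
        (hEint y ⟨hy.1.le, hy.2⟩) (fun s _ => hEpos s) hy.1
    have hFx : F x ≠ 0 := (hFpos x ⟨hx0, hx1⟩).ne'
    have hD : F 1 ≠ 0 := (hFpos 1 ⟨one_pos, le_rfl⟩).ne'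
    -- rewrite φ and the goal's integrals
    have hφ : ∀ y, φ y = F y / F 1 := fun y => rfl
    have hA : ∀ y : ℝ,
        (∫ s in (0:ℝ)..y, (∫ t in (0:ℝ)..s, Δη t) * Real.exp (∫ t in (0:ℝ)..s, η t))
          = ∫ s in (0:ℝ)..y, G s * E s := fun y => rfl
    have hΔφ : ∀ y ∈ Set.Icc (0:ℝ) 1,
        (∫ s in (0:ℝ)..y, Δη s * φ s) = (∫ s in (0:ℝ)..y, Δη s * F s) / F 1 := by
      intro y hy
      rw [← intervalIntegral.integral_div]
      congr 1 with s
      rw [hφ, mul_div_assoc]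
    have hx1int : (∫ s in x..(1:ℝ), Δη s) = G 1 - G x := by
      rw [hGdef]
      exact (intervalIntegral.integral_interval_sub_left (hΔint 1 h1mem) (hΔint x hxmem)).symm
    rw [hA, hA, hφ, hΔφ 1 h1mem, hΔφ x hxmem, hx1int, hparts 1 h1mem, hparts x hxmem]
    show ((∫ s in (0:ℝ)..x, G s * E s) / F x - (∫ s in (0:ℝ)..1, G s * E s) / F 1) * (F x / F 1)
      = _
    field_simp
    ring
  · -- particular case
    simp only [intervalIntegral.integral_zero, Real.exp_zero, mul_one,
      integral_one, integral_id, sub_zero]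
    have hxne : x ≠ 0 := hx0.ne'
    field_simp
    ring
end

section
/- Fix x ∈ [0,1]. The operator F : C([0,1], ℝ) → ℝ defined by F(η) = Dφ_η(x) = exp(∫₀ˣ η(t) dt) / (∫₀¹ exp(∫₀ˢ η(t) dt) ds) is Fréchet differentiable at every η ∈ C([0,1], ℝ) (with respect to the supremum norm), with derivative Δη ↦ ( exp(∫₀ˣ η) / (∫₀¹ exp(∫₀ˢ η) ds)² ) · ( (∫₀¹ exp(∫₀ˢ η) ds) · ∫₀ˣ Δη(t) dt − ∫₀¹ exp(∫₀ˢ η) · (∫₀ˢ Δη(t) dt) ds ), and this derivative is a bounded linear functional whose norm is bounded uniformly for η in any bounded subset of C([0,1], ℝ). -/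
/-! With `V` the primitive operator `g ↦ (s ↦ ∫₀ˢ g)` on the commutative Banach algebra
`C([0,1], ℝ)` and `exp` its exponential (pointwise `Real.exp`), the operator is the quotient
`η ↦ (exp (V η))(x) / (V (exp (V η)))(1)` of two continuous linear functionals applied to
`exp ∘ V`. The Banach-algebra exponential is differentiable with derivative multiplication by
`exp`, so the chain and quotient rules give the derivative. For `‖η‖ ≤ R` one has
`‖exp (V η)‖ ≤ e^R` and the denominator is at least `e^{-R}`, which bounds the derivative
uniformly. -/

open Set MeasureTheory

/-- `F(η) = Dφ_η(x) = exp(∫₀ˣ η) / ∫₀¹ exp(∫₀ˢ η) ds`. -/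
noncomputable def Dphi (η : C(Set.Icc (0:ℝ) 1, ℝ)) (x : ℝ) : ℝ :=
  Real.exp (∫ t in (0:ℝ)..x, extIcc η t) /
  (∫ s in (0:ℝ)..1, Real.exp (∫ t in (0:ℝ)..s, extIcc η t))

open NormedSpace

theorem HasFDerivAt.fun_div {𝕜 E : Type*} [NontriviallyNormedField 𝕜] [NormedAddCommGroup E]
    [NormedSpace 𝕜 E] {c d : E → 𝕜} {c' d' : E →L[𝕜] 𝕜} {x : E}
    (hc : HasFDerivAt c c' x) (hd : HasFDerivAt d d' x) (hx : d x ≠ 0) :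
    HasFDerivAt (fun y => c y / d y) ((d x ^ 2)⁻¹ • (d x • c' - c x • d')) x := by
  simp_rw [div_eq_mul_inv]
  refine (hc.fun_mul ((hasFDerivAt_inv hx).comp x hd)).congr_fderiv ?_
  ext v
  simp only [Function.comp_apply, add_apply, smul_apply, ContinuousLinearMap.comp_apply,
    ContinuousLinearMap.toSpanSingleton_apply, smul_eq_mul, mul_neg, sub_apply]
  field_simp
  ring

theorem ContinuousMap.exp_apply {X : Type*} [TopologicalSpace X] [CompactSpace X]
    (f : C(X, ℝ)) (t : X) : exp f t = Real.exp (f t) := by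
  rw [Real.exp_eq_exp_ℝ]
  exact map_exp (ContinuousMap.evalAlgHom ℝ ℝ t) (continuous_eval_const t) f

theorem ContinuousMap.norm_exp_le {X : Type*} [TopologicalSpace X] [CompactSpace X]
    (f : C(X, ℝ)) : ‖exp f‖ ≤ Real.exp ‖f‖ :=
  (ContinuousMap.norm_le _ (Real.exp_nonneg _)).2 fun t => by
    rw [ContinuousMap.exp_apply, Real.norm_of_nonneg (Real.exp_nonneg _)]
    exact Real.exp_le_exp.2 (f.apply_le_norm t)

section ExpRatio

variable {E 𝔸 : Type*} [NormedAddCommGroup E] [NormedSpace ℝ E]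
  [NormedCommRing 𝔸] [NormedAlgebra ℝ 𝔸]

theorem hasFDerivAt_exp_comp [CompleteSpace 𝔸] (T : E →L[ℝ] 𝔸) (η : E) :
    HasFDerivAt (fun ζ => exp (T ζ)) ((ContinuousLinearMap.mul ℝ 𝔸 (exp (T η))).comp T) η := by
  have hexp : HasFDerivAt exp (ContinuousLinearMap.mul ℝ 𝔸 (exp (T η))) (T η) :=
    (hasFDerivAt_exp (𝕂 := ℝ)).congr_fderiv (by ext; simp)
  exact hexp.comp η T.hasFDerivAt

noncomputable def expRatioFDeriv (ℓ m : 𝔸 →L[ℝ] ℝ) (T : E →L[ℝ] 𝔸) (η : E) : E →L[ℝ] ℝ :=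
  let w := exp (T η)
  let D := (ContinuousLinearMap.mul ℝ 𝔸 w).comp T
  (m w ^ 2)⁻¹ • (m w • ℓ.comp D - ℓ w • m.comp D)

theorem hasFDerivAt_expRatio [CompleteSpace 𝔸] (ℓ m : 𝔸 →L[ℝ] ℝ) (T : E →L[ℝ] 𝔸) {η : E}
    (hη : m (exp (T η)) ≠ 0) :
    HasFDerivAt (fun ζ => ℓ (exp (T ζ)) / m (exp (T ζ))) (expRatioFDeriv ℓ m T η) η :=
  (ℓ.hasFDerivAt.comp η (hasFDerivAt_exp_comp T η)).fun_div
    (m.hasFDerivAt.comp η (hasFDerivAt_exp_comp T η)) hη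

theorem norm_expRatioFDeriv_le (ℓ m : 𝔸 →L[ℝ] ℝ) (T : E →L[ℝ] 𝔸) {η : E} {A B : ℝ}
    (hA : ‖exp (T η)‖ ≤ A) (hB : 0 < B) (hmB : B ≤ |m (exp (T η))|) :
    ‖expRatioFDeriv ℓ m T η‖ ≤ 2 * ‖ℓ‖ * ‖m‖ * ‖T‖ * A ^ 2 / B ^ 2 := by
  set w := exp (T η)
  set D := (ContinuousLinearMap.mul ℝ 𝔸 w).comp T
  have hD : ‖D‖ ≤ A * ‖T‖ := by
    refine (ContinuousLinearMap.opNorm_comp_le _ _).trans ?_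
    gcongr
    exact (ContinuousLinearMap.opNorm_mul_apply_le ℝ 𝔸 w).trans hA
  have hℓw : |ℓ w| ≤ ‖ℓ‖ * A := (ℓ.le_opNorm w).trans (by gcongr)
  have hmw : |m w| ≤ ‖m‖ * A := (m.le_opNorm w).trans (by gcongr)
  have hmw0 : 0 < |m w| := hB.trans_le hmB
  have hA0 : 0 ≤ A := (norm_nonneg w).trans hA
  calc ‖expRatioFDeriv ℓ m T η‖
      = (|m w| ^ 2)⁻¹ * ‖m w • ℓ.comp D - ℓ w • m.comp D‖ := by
        rw [expRatioFDeriv, norm_smul, norm_inv, norm_pow, Real.norm_eq_abs]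
    _ ≤ (|m w| ^ 2)⁻¹ * (|m w| * (‖ℓ‖ * ‖D‖) + |ℓ w| * (‖m‖ * ‖D‖)) := by
        gcongr
        refine (norm_sub_le _ _).trans ?_
        rw [norm_smul, norm_smul, Real.norm_eq_abs, Real.norm_eq_abs]
        gcongr <;> exact ContinuousLinearMap.opNorm_comp_le _ _
    _ ≤ (B ^ 2)⁻¹ * ((‖m‖ * A) * (‖ℓ‖ * (A * ‖T‖)) + (‖ℓ‖ * A) * (‖m‖ * (A * ‖T‖))) := by
        gcongr
    _ = 2 * ‖ℓ‖ * ‖m‖ * ‖T‖ * A ^ 2 / B ^ 2 := by ring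

end ExpRatio

theorem extIcc_of_mem (g : C(Icc (0:ℝ) 1, ℝ)) {s : ℝ} (hs : s ∈ Icc (0:ℝ) 1) :
    extIcc g s = g ⟨s, hs⟩ := by
  rw [extIcc, projIcc_of_mem]

theorem intervalIntegrable_extIcc (g : C(Icc (0:ℝ) 1, ℝ)) (a b : ℝ) :
    IntervalIntegrable (extIcc g) volume a b :=
  (g.continuous.comp continuous_projIcc).intervalIntegrable a b

theorem norm_integral_extIcc_le (g : C(Icc (0:ℝ) 1, ℝ)) (s : Icc (0:ℝ) 1) :
    ‖∫ t in (0:ℝ)..s, extIcc g t‖ ≤ ‖g‖ := by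
  have hs : |(s : ℝ) - 0| ≤ 1 := by
    rw [sub_zero, abs_of_nonneg s.2.1]; exact s.2.2
  calc ‖∫ t in (0:ℝ)..s, extIcc g t‖ ≤ ‖g‖ * |(s : ℝ) - 0| :=
        intervalIntegral.norm_integral_le_of_norm_le_const fun t _ => g.norm_coe_le_norm _
    _ ≤ ‖g‖ := mul_le_of_le_one_right (norm_nonneg g) hs

noncomputable def primitive : C(Icc (0:ℝ) 1, ℝ) →L[ℝ] C(Icc (0:ℝ) 1, ℝ) :=
  LinearMap.mkContinuous
    { toFun := fun g => ⟨fun s => ∫ t in (0:ℝ)..s, extIcc g t,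
        (intervalIntegral.continuous_primitive (intervalIntegrable_extIcc g) 0).comp
          continuous_subtype_val⟩
      map_add' := fun g h => by
        ext s
        exact intervalIntegral.integral_add (intervalIntegrable_extIcc g _ _)
          (intervalIntegrable_extIcc h _ _)
      map_smul' := fun c g => by
        ext s
        exact intervalIntegral.integral_smul c _ }
    1 fun g => by
      rw [one_mul]
      exact (ContinuousMap.norm_le _ (norm_nonneg g)).2 (norm_integral_extIcc_le g)

theorem primitive_apply (g : C(Icc (0:ℝ) 1, ℝ)) (s : Icc (0:ℝ) 1) :
    primitive g s = ∫ t in (0:ℝ)..s, extIcc g t :=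
  rfl

theorem norm_primitive_apply_le (g : C(Icc (0:ℝ) 1, ℝ)) : ‖primitive g‖ ≤ ‖g‖ :=
  (ContinuousMap.norm_le _ (norm_nonneg g)).2 (norm_integral_extIcc_le g)

theorem primitive_apply_one_eq_integral (g : C(Icc (0:ℝ) 1, ℝ)) {f : ℝ → ℝ}
    (hgf : ∀ s (hs : s ∈ Icc (0:ℝ) 1), g ⟨s, hs⟩ = f s) :
    primitive g 1 = ∫ s in (0:ℝ)..1, f s := by
  rw [primitive_apply, Icc.coe_one]
  refine intervalIntegral.integral_congr fun s hs => ?_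
  rw [uIcc_of_le zero_le_one] at hs
  rw [extIcc_of_mem g hs, hgf s hs]

theorem le_primitive_apply_one (g : C(Icc (0:ℝ) 1, ℝ)) {c : ℝ} (hc : ∀ s, c ≤ g s) :
    c ≤ primitive g 1 :=
  calc c = ∫ _ in (0:ℝ)..1, c := by simp
    _ ≤ primitive g 1 := by
        rw [primitive_apply, Icc.coe_one]
        exact intervalIntegral.integral_mono_on zero_le_one
          intervalIntegrable_const (intervalIntegrable_extIcc g 0 1) fun _ _ => hc _

theorem exp_neg_norm_le_primitive_exp_primitive (η : C(Icc (0:ℝ) 1, ℝ)) :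
    Real.exp (-‖η‖) ≤ primitive (exp (primitive η)) 1 :=
  le_primitive_apply_one _ fun s => by
    rw [ContinuousMap.exp_apply, Real.exp_le_exp]
    exact (neg_le_neg (norm_primitive_apply_le η)).trans ((primitive η).neg_norm_le_apply s)

theorem primitive_exp_primitive_apply_one (η : C(Icc (0:ℝ) 1, ℝ)) :
    primitive (exp (primitive η)) 1 = ∫ s in (0:ℝ)..1, Real.exp (∫ t in (0:ℝ)..s, extIcc η t) :=
  primitive_apply_one_eq_integral _ fun _ _ => ContinuousMap.exp_apply _ _

theorem Dphi_eq_div (η : C(Icc (0:ℝ) 1, ℝ)) {x : ℝ} (hx : x ∈ Icc (0:ℝ) 1) :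
    Dphi η x = exp (primitive η) ⟨x, hx⟩ / primitive (exp (primitive η)) 1 := by
  rw [Dphi, primitive_exp_primitive_apply_one, ContinuousMap.exp_apply, primitive_apply]

/-- The operator `F : η ↦ Dφ_η(x)` on `C([0,1],ℝ)` (with the sup norm) is Fréchet
differentiable at every `η`, with derivative
`Δη ↦ (e^{∫₀ˣη}/(∫₀¹e^{∫₀ˢη}ds)²)·((∫₀¹e^{∫₀ˢη}ds)·∫₀ˣΔη − ∫₀¹e^{∫₀ˢη}·(∫₀ˢΔη)ds)`,
and the norm of this derivative is bounded uniformly on bounded subsets of `C([0,1],ℝ)`. -/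
theorem derivative_evaluation_operator_hasFDerivAt
    (x : ℝ) (hx : x ∈ Set.Icc (0:ℝ) 1) :
    ∃ DF : C(Set.Icc (0:ℝ) 1, ℝ) → (C(Set.Icc (0:ℝ) 1, ℝ) →L[ℝ] ℝ),
      (∀ η, HasFDerivAt (fun ζ => Dphi ζ x) (DF η) η) ∧
      (∀ η Δη,
        DF η Δη =
          Real.exp (∫ t in (0:ℝ)..x, extIcc η t) /
              (∫ s in (0:ℝ)..1, Real.exp (∫ t in (0:ℝ)..s, extIcc η t)) ^ 2 *
            ((∫ s in (0:ℝ)..1, Real.exp (∫ t in (0:ℝ)..s, extIcc η t)) *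
                (∫ t in (0:ℝ)..x, extIcc Δη t) -
              ∫ s in (0:ℝ)..1,
                Real.exp (∫ t in (0:ℝ)..s, extIcc η t) *
                  (∫ t in (0:ℝ)..s, extIcc Δη t))) ∧
      (∀ R : ℝ, ∃ M : ℝ, ∀ η : C(Set.Icc (0:ℝ) 1, ℝ), ‖η‖ ≤ R → ‖DF η‖ ≤ M) := by
  set ℓ : C(Icc (0:ℝ) 1, ℝ) →L[ℝ] ℝ := ContinuousMap.evalCLM ℝ ⟨x, hx⟩
  set m : C(Icc (0:ℝ) 1, ℝ) →L[ℝ] ℝ := (ContinuousMap.evalCLM ℝ 1).comp primitive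
  have hm_lower (η : C(Icc (0:ℝ) 1, ℝ)) : Real.exp (-‖η‖) ≤ m (exp (primitive η)) :=
    exp_neg_norm_le_primitive_exp_primitive η
  refine ⟨expRatioFDeriv ℓ m primitive, fun η => ?_, fun η Δη => ?_, fun R =>
    ⟨2 * ‖ℓ‖ * ‖m‖ * ‖primitive‖ * Real.exp R ^ 2 / Real.exp (-R) ^ 2, fun η hη => ?_⟩⟩
  · simp_rw [Dphi_eq_div _ hx]
    exact hasFDerivAt_expRatio ℓ m primitive ((Real.exp_pos _).trans_le (hm_lower η)).ne'
  · have hmΔ : m (exp (primitive η) * primitive Δη) = ∫ s in (0:ℝ)..1,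
        Real.exp (∫ t in (0:ℝ)..s, extIcc η t) * (∫ t in (0:ℝ)..s, extIcc Δη t) :=
      primitive_apply_one_eq_integral _ fun _ _ => by
        rw [ContinuousMap.mul_apply, ContinuousMap.exp_apply, primitive_apply, primitive_apply]
    simp only [expRatioFDeriv, smul_apply, sub_apply, ContinuousLinearMap.comp_apply,
      ContinuousLinearMap.mul_apply', smul_eq_mul, hmΔ]
    rw [show m (exp (primitive η)) = _ from primitive_exp_primitive_apply_one η]
    simp only [ℓ, ContinuousMap.evalCLM_apply, ContinuousMap.mul_apply, ContinuousMap.exp_apply,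
      primitive_apply]
    ring
  · refine norm_expRatioFDeriv_le ℓ m primitive ?_ (Real.exp_pos _) ?_
    · exact (ContinuousMap.norm_exp_le _).trans
        (Real.exp_le_exp.2 ((norm_primitive_apply_le η).trans hη))
    · exact (Real.exp_le_exp.2 (neg_le_neg hη)).trans ((hm_lower η).trans (le_abs_self _))
end
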